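/- For d = 3, the optimal candidate function f* satisfies f*(1) = 3/2, f*(2) = 21/8, and f*(3) = 777/128; consequently 1 − 1/f*(3) = 649/777 > 0.8352, so the OCS-based algorithm with weight sequence f* is at least 0.8352-competitive for (vertex-weighted) online bipartite matching on (3,3)-bounded graphs. -/

import Mathlib

/-- The optimal candidate function `f*`: `f* 0 = 1` and
`f* l = f* (l-1) · min_{1 ≤ m ≤ d-1} (1 + m·f*(l-1)/(d-m))^{1/m}`. -/
noncomputable def fstar (d : ℕ) : ℕ → ℝ
  | 0 => 1
  | l + 1 =>
      fstar d l *
        sInf ((fun m : ℕ => (1 + (m : ℝ) * fstar d l / ((d : ℝ) - m)) ^ (1 / (m : ℝ))) ''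
          Set.Icc 1 (d - 1))

/-- Transition probabilities for one round of the OCS-based algorithm: a request with
neighborhood `N` arrives while the matched set is `M` and the current server degrees are
`deg`; the matched set becomes `M'` by matching the request to an unmatched neighbor
`s ∈ N \ M` with probability proportional to `f (deg s)`. -/
noncomputable def ocsTransProb {ns : ℕ} (f : ℕ → ℝ) (deg : Fin ns → ℕ)
    (N M M' : Finset (Fin ns)) : ℝ :=
  if N \ M = ∅ then (if M' = M then 1 else 0)
  else ∑ s ∈ N \ M,
    if M' = insert s M then f (deg s) / ∑ s' ∈ N \ M, f (deg s') else 0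

/-- Running the OCS-based algorithm on the remaining request sequence, starting from
current degrees `deg` and current distribution `μ` over matched sets. -/
noncomputable def ocsRun {ns : ℕ} (f : ℕ → ℝ) :
    List (Finset (Fin ns)) → (Fin ns → ℕ) → (Finset (Fin ns) → ℝ) →
      Finset (Fin ns) → ℝ
  | [], _, μ => μ
  | N :: rest, deg, μ =>
      ocsRun f rest (fun s => if s ∈ N then deg s + 1 else deg s)
        (fun M' => ∑ M : Finset (Fin ns), μ M * ocsTransProb f deg N M M')

/-- The distribution over sets of matched servers produced by the OCS-based algorithm
with weight sequence `f` on the request sequence `Ns`. -/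
noncomputable def ocsDist {ns : ℕ} (f : ℕ → ℝ) (Ns : List (Finset (Fin ns))) :
    Finset (Fin ns) → ℝ :=
  ocsRun f Ns (fun _ => 0) (fun M => if M = ∅ then 1 else 0)

/-- `g` is a matching: each request gets at most one neighboring server, no server
used twice. -/
def IsMatching {ns : ℕ} (Ns : List (Finset (Fin ns)))
    (g : Fin Ns.length → Option (Fin ns)) : Prop :=
  (∀ i s, g i = some s → s ∈ Ns.get i) ∧
    ∀ i j s, g i = some s → g j = some s → i = j

lemma fstar3_succ (l : ℕ) : fstar 3 (l+1) =
    fstar 3 l * min (1 + fstar 3 l / 2) ((1 + 2 * fstar 3 l) ^ ((2:ℝ))⁻¹) := by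
  rw [fstar]
  congr 1
  have h : Set.Icc 1 (3-1) = ({1, 2} : Set ℕ) := by
    ext n; simp [Set.mem_Icc]; omega
  rw [h, Set.image_insert_eq, Set.image_singleton, csInf_pair]
  norm_num

lemma fstar3_one_le : ∀ l, 1 ≤ fstar 3 l := by
  intro l
  induction l with
  | zero => simp [fstar]
  | succ l ih =>
    rw [fstar3_succ]
    have h0 : (0:ℝ) < fstar 3 l := lt_of_lt_of_le one_pos ih
    have h1 : (1:ℝ) ≤ 1 + fstar 3 l / 2 := by linarith
    have h2 : (1:ℝ) ≤ (1 + 2 * fstar 3 l) ^ ((2:ℝ))⁻¹ := by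
      apply Real.one_le_rpow (by linarith) (by norm_num)
    calc (1:ℝ) = 1 * 1 := by ring
    _ ≤ fstar 3 l * min (1 + fstar 3 l / 2) ((1 + 2 * fstar 3 l) ^ ((2:ℝ))⁻¹) := by
        apply mul_le_mul ih (le_min h1 h2) (by norm_num) (le_of_lt h0)

lemma fstar3_pos (l : ℕ) : 0 < fstar 3 l := lt_of_lt_of_le one_pos (fstar3_one_le l)

lemma fstar3_mono : Monotone (fstar 3) := by
  apply monotone_nat_of_le_succ
  intro l
  rw [fstar3_succ]
  have h0 : (0:ℝ) < fstar 3 l := fstar3_pos l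
  have h1 : (1:ℝ) ≤ 1 + fstar 3 l / 2 := by linarith
  have h2 : (1:ℝ) ≤ (1 + 2 * fstar 3 l) ^ ((2:ℝ))⁻¹ :=
    Real.one_le_rpow (by linarith) (by norm_num)
  nlinarith [le_min h1 h2]

lemma rpow_half_eq_sqrt (x : ℝ) (hx : 0 ≤ x) : x ^ ((2:ℝ))⁻¹ = Real.sqrt x := by
  rw [Real.sqrt_eq_rpow]; norm_num

lemma fstar3_one : fstar 3 1 = 3 / 2 := by
  have h0 : fstar 3 0 = 1 := by simp [fstar]
  rw [fstar3_succ, h0, rpow_half_eq_sqrt _ (by norm_num)]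
  rw [min_eq_left, ]
  · norm_num
  · rw [show (1:ℝ) + 2*1 = 3 by norm_num]
    rw [show (1:ℝ) + 1/2 = 3/2 by norm_num]
    rw [Real.le_sqrt (by norm_num)]
    norm_num
    norm_num

lemma fstar3_two : fstar 3 2 = 21 / 8 := by
  rw [show (2:ℕ) = 1 + 1 from rfl, fstar3_succ, fstar3_one,
    rpow_half_eq_sqrt _ (by norm_num)]
  rw [min_eq_left]
  · norm_num
  · rw [show (1:ℝ) + 2*(3/2) = 4 by norm_num]
    rw [Real.le_sqrt (by norm_num)]
    norm_num
    norm_num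

lemma fstar3_three : fstar 3 3 = 777 / 128 := by
  rw [show (3:ℕ) = 2 + 1 from rfl, fstar3_succ, fstar3_two,
    rpow_half_eq_sqrt _ (by norm_num)]
  rw [min_eq_left]
  · norm_num
  · rw [show (1:ℝ) + 2*(21/8) = 25/4 by norm_num]
    rw [Real.le_sqrt (by norm_num)]
    norm_num
    norm_num

lemma fstar3_ratio1 (l : ℕ) : fstar 3 (l+1) ≤ fstar 3 l * (1 + fstar 3 l / 2) := by
  rw [fstar3_succ]
  exact mul_le_mul_of_nonneg_left (min_le_left _ _) (le_of_lt (fstar3_pos l))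

lemma fstar3_ratio2 (l : ℕ) : fstar 3 (l+1) ≤ fstar 3 l * Real.sqrt (1 + 2 * fstar 3 l) := by
  rw [fstar3_succ]
  rw [← rpow_half_eq_sqrt _ (by nlinarith [fstar3_pos l])]
  exact mul_le_mul_of_nonneg_left (min_le_right _ _) (le_of_lt (fstar3_pos l))

lemma trans_nonneg {ns : ℕ} (deg : Fin ns → ℕ) (N M M' : Finset (Fin ns)) :
    0 ≤ ocsTransProb (fstar 3) deg N M M' := by
  unfold ocsTransProb
  split
  · split <;> norm_num
  · apply Finset.sum_nonneg
    intro s _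
    split
    · apply div_nonneg (le_of_lt (fstar3_pos _))
      exact Finset.sum_nonneg fun s' _ => le_of_lt (fstar3_pos _)
    · rfl

lemma Dpos {ns : ℕ} (deg : Fin ns → ℕ) {N M : Finset (Fin ns)} (h : N \ M ≠ ∅) :
    0 < ∑ s' ∈ N \ M, fstar 3 (deg s') :=
  Finset.sum_pos (fun s _ => fstar3_pos _) (Finset.nonempty_of_ne_empty h)

lemma trans_sum {ns : ℕ} (deg : Fin ns → ℕ) (N M : Finset (Fin ns)) :
    ∑ M' : Finset (Fin ns), ocsTransProb (fstar 3) deg N M M' = 1 := by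
  unfold ocsTransProb
  by_cases h : N \ M = ∅
  · simp [h]
  · simp only [if_neg h]
    rw [Finset.sum_comm]
    have : ∀ s ∈ N \ M, (∑ M' : Finset (Fin ns),
        if M' = insert s M then fstar 3 (deg s) / ∑ s' ∈ N \ M, fstar 3 (deg s') else 0)
        = fstar 3 (deg s) / ∑ s' ∈ N \ M, fstar 3 (deg s') := by
      intro s _
      rw [Finset.sum_ite_eq' Finset.univ (insert s M)]
      simp
    rw [Finset.sum_congr rfl this, ← Finset.sum_div, div_self (ne_of_gt (Dpos deg h))]

lemma q_zero {ns : ℕ} (deg : Fin ns → ℕ) (N T M : Finset (Fin ns)) (hM : M ∩ T ≠ ∅) :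
    (∑ M' : Finset (Fin ns), if M' ∩ T = ∅ then ocsTransProb (fstar 3) deg N M M' else 0)
      = 0 := by
  apply Finset.sum_eq_zero
  intro M' _
  split
  · rename_i hM'
    unfold ocsTransProb
    split
    · split
      · rename_i h; exact absurd (h ▸ hM') hM
      · rfl
    · apply Finset.sum_eq_zero
      intro s _
      split
      · rename_i h
        exfalso
        apply hM
        have : M ∩ T ⊆ M' ∩ T := by
          rw [h]; exact Finset.inter_subset_inter (Finset.subset_insert s M) le_rfl
        rw [Finset.eq_empty_iff_forall_notMem] at hM' ⊢
        intro x hx; exact hM' x (this hx)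
      · rfl
  · rfl

lemma q_le_one {ns : ℕ} (deg : Fin ns → ℕ) (N T M : Finset (Fin ns)) :
    (∑ M' : Finset (Fin ns), if M' ∩ T = ∅ then ocsTransProb (fstar 3) deg N M M' else 0)
      ≤ 1 := by
  rw [← trans_sum deg N M]
  apply Finset.sum_le_sum
  intro M' _
  split
  · rfl
  · exact trans_nonneg deg N M M'

lemma q_eq {ns : ℕ} (deg : Fin ns → ℕ) (N T M : Finset (Fin ns)) (hM : M ∩ T = ∅)
    (hNM : N \ M ≠ ∅) :
    (∑ M' : Finset (Fin ns), if M' ∩ T = ∅ then ocsTransProb (fstar 3) deg N M M' else 0)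
      = (∑ s ∈ (N \ T) \ M, fstar 3 (deg s)) / (∑ s ∈ N \ M, fstar 3 (deg s)) := by
  unfold ocsTransProb
  simp only [if_neg hNM]
  have step1 : ∀ M' : Finset (Fin ns),
      (if M' ∩ T = ∅ then (∑ s ∈ N \ M,
          if M' = insert s M then fstar 3 (deg s) / ∑ s' ∈ N \ M, fstar 3 (deg s') else 0)
        else 0)
      = ∑ s ∈ N \ M, if M' = insert s M then
          (if s ∈ T then 0 else fstar 3 (deg s) / ∑ s' ∈ N \ M, fstar 3 (deg s')) else 0 := by
    intro M'
    by_cases hM' : M' ∩ T = ∅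
    · rw [if_pos hM']
      apply Finset.sum_congr rfl
      intro s _
      by_cases h : M' = insert s M
      · rw [if_pos h, if_pos h, if_neg]
        intro hsT
        have : s ∈ M' ∩ T := by
          rw [h]; exact Finset.mem_inter.2 ⟨Finset.mem_insert_self s M, hsT⟩
        rw [hM'] at this; exact absurd this (Finset.notMem_empty s)
      · rw [if_neg h, if_neg h]
    · rw [if_neg hM']
      symm
      apply Finset.sum_eq_zero
      intro s _
      by_cases h : M' = insert s M
      · rw [if_pos h]
        by_cases hsT : s ∈ T
        · rw [if_pos hsT]
        · exfalso
          apply hM'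
          rw [h, Finset.insert_inter_of_notMem hsT, hM]
      · rw [if_neg h]
  rw [Finset.sum_congr rfl (fun M' _ => step1 M'), Finset.sum_comm]
  have step2 : ∀ s ∈ N \ M, (∑ M' : Finset (Fin ns), if M' = insert s M then
      (if s ∈ T then 0 else fstar 3 (deg s) / ∑ s' ∈ N \ M, fstar 3 (deg s')) else 0)
      = if s ∈ T then 0 else fstar 3 (deg s) / ∑ s' ∈ N \ M, fstar 3 (deg s') := by
    intro s _
    rw [Finset.sum_ite_eq' Finset.univ (insert s M)]
    simp
  rw [Finset.sum_congr rfl step2]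
  have hset : (N \ T) \ M = (N \ M).filter (fun s => ¬ s ∈ T) := by
    ext x
    simp only [Finset.mem_sdiff, Finset.mem_filter]
    tauto
  rw [hset, Finset.sum_div, Finset.sum_filter]
  apply Finset.sum_congr rfl
  intro x _
  by_cases hx : x ∈ T
  · simp [hx]
  · simp [hx]

lemma key_prod {ns : ℕ} (deg : Fin ns → ℕ) (A : Finset (Fin ns)) (hk1 : A.Nonempty)
    (hk3 : A.card ≤ 3) :
    ((3:ℝ) - A.card) * ∏ s ∈ A, fstar 3 (deg s + 1)
      ≤ (((3:ℝ) - A.card) + ∑ s ∈ A, fstar 3 (deg s)) * ∏ s ∈ A, fstar 3 (deg s) := by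
  have hk1' : 1 ≤ A.card := Finset.card_pos.2 hk1
  interval_cases h : A.card
  · -- card = 1
    obtain ⟨a, ha⟩ := Finset.card_eq_one.1 h
    subst ha
    simp only [Finset.prod_singleton, Finset.sum_singleton, Finset.card_singleton]
    have h1 := fstar3_ratio1 (deg a)
    have h2 := fstar3_pos (deg a)
    push_cast
    nlinarith
  · -- card = 2
    obtain ⟨a, b, hab, hA⟩ := Finset.card_eq_two.1 h
    subst hA
    rw [Finset.prod_pair hab, Finset.prod_pair hab, Finset.sum_pair hab]
    have h2a := fstar3_ratio2 (deg a)
    have h2b := fstar3_ratio2 (deg b)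
    have hpa := fstar3_pos (deg a)
    have hpb := fstar3_pos (deg b)
    have hpa1 := fstar3_pos (deg a + 1)
    have hpb1 := fstar3_pos (deg b + 1)
    have hsa : (0:ℝ) ≤ 1 + 2 * fstar 3 (deg a) := by nlinarith
    have hsb : (0:ℝ) ≤ 1 + 2 * fstar 3 (deg b) := by nlinarith
    have hmul : fstar 3 (deg a + 1) * fstar 3 (deg b + 1) ≤
        (fstar 3 (deg a) * fstar 3 (deg b)) *
          (Real.sqrt (1 + 2 * fstar 3 (deg a)) * Real.sqrt (1 + 2 * fstar 3 (deg b))) := by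
      calc fstar 3 (deg a + 1) * fstar 3 (deg b + 1)
          ≤ (fstar 3 (deg a) * Real.sqrt (1 + 2 * fstar 3 (deg a))) *
            (fstar 3 (deg b) * Real.sqrt (1 + 2 * fstar 3 (deg b))) := by
            apply mul_le_mul h2a h2b (le_of_lt hpb1)
            positivity
        _ = (fstar 3 (deg a) * fstar 3 (deg b)) *
            (Real.sqrt (1 + 2 * fstar 3 (deg a)) * Real.sqrt (1 + 2 * fstar 3 (deg b))) := by
            ring
    have hsqrt : Real.sqrt (1 + 2 * fstar 3 (deg a)) * Real.sqrt (1 + 2 * fstar 3 (deg b))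
        ≤ 1 + fstar 3 (deg a) + fstar 3 (deg b) := by
      rw [← Real.sqrt_mul hsa]
      calc Real.sqrt ((1 + 2 * fstar 3 (deg a)) * (1 + 2 * fstar 3 (deg b)))
          ≤ Real.sqrt ((1 + fstar 3 (deg a) + fstar 3 (deg b))^2) := by
            apply Real.sqrt_le_sqrt; nlinarith [sq_nonneg (fstar 3 (deg a) - fstar 3 (deg b))]
        _ = 1 + fstar 3 (deg a) + fstar 3 (deg b) := Real.sqrt_sq (by nlinarith)
    push_cast
    have hfab : (0:ℝ) ≤ fstar 3 (deg a) * fstar 3 (deg b) := by positivity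
    nlinarith [mul_le_mul_of_nonneg_left hsqrt hfab]
  · -- card = 3
    have : ((3:ℝ) - 3) = 0 := by norm_num
    push_cast
    rw [this]
    simp only [zero_mul, zero_add]
    have h1 : 0 < ∑ s ∈ A, fstar 3 (deg s) := Finset.sum_pos (fun s _ => fstar3_pos _) hk1
    have h2 : 0 < ∏ s ∈ A, fstar 3 (deg s) := Finset.prod_pos (fun s _ => fstar3_pos _)
    positivity

lemma q_eq' {ns : ℕ} (deg : Fin ns → ℕ) (N T M : Finset (Fin ns)) (hMT : M ∩ T = ∅)
    (hAne : (N ∩ T).Nonempty) :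
    (∑ M' : Finset (Fin ns), if M' ∩ T = ∅ then ocsTransProb (fstar 3) deg N M M' else 0)
      = (∑ s ∈ (N \ T) \ M, fstar 3 (deg s)) /
        ((∑ s ∈ N ∩ T, fstar 3 (deg s)) + ∑ s ∈ (N \ T) \ M, fstar 3 (deg s)) := by
  have hAsub : N ∩ T ⊆ N \ M := by
    intro s hs
    rw [Finset.mem_sdiff]
    have hsN : s ∈ N := (Finset.mem_inter.1 hs).1
    have hsT : s ∈ T := (Finset.mem_inter.1 hs).2
    exact ⟨hsN, fun hsM => (Finset.notMem_empty s) (hMT ▸ Finset.mem_inter.2 ⟨hsM, hsT⟩)⟩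
  have hNM : N \ M ≠ ∅ := by
    intro h
    rw [h, Finset.subset_empty] at hAsub
    exact Finset.not_nonempty_empty (hAsub ▸ hAne)
  rw [q_eq deg N T M hMT hNM]
  congr 1
  have hsplit := Finset.sum_sdiff (f := fun s => fstar 3 (deg s)) hAsub
  have hBeq : (N \ M) \ (N ∩ T) = (N \ T) \ M := by
    ext x
    simp only [Finset.mem_sdiff, Finset.mem_inter]
    tauto
  rw [← hsplit, hBeq]
  ring

lemma v_bound {ns : ℕ} (deg : Fin ns → ℕ) (N T : Finset (Fin ns))
    (μ : Finset (Fin ns) → ℝ) (hμ0 : ∀ M, 0 ≤ μ M)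
    (hinv : ∀ T : Finset (Fin ns),
      (∑ M : Finset (Fin ns), if M ∩ T = ∅ then μ M else 0) ≤ ∏ s ∈ T, (fstar 3 (deg s))⁻¹) :
    (∑ M : Finset (Fin ns), if M ∩ T = ∅ then
        μ M * ∑ s ∈ (N \ T) \ M, fstar 3 (deg s) else 0)
      ≤ ((N \ T).card : ℝ) * ∏ s ∈ T, (fstar 3 (deg s))⁻¹ := by
  have h1 : ∀ M : Finset (Fin ns), (if M ∩ T = ∅ then
      μ M * ∑ s ∈ (N \ T) \ M, fstar 3 (deg s) else 0)
      = ∑ s ∈ N \ T, fstar 3 (deg s) * (if M ∩ insert s T = ∅ then μ M else 0) := by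
    intro M
    have h2 : ∀ s ∈ N \ T, fstar 3 (deg s) * (if M ∩ insert s T = ∅ then μ M else 0)
        = if M ∩ T = ∅ then (if s ∈ M then 0 else μ M * fstar 3 (deg s)) else 0 := by
      intro s _
      by_cases hMT : M ∩ T = ∅
      · rw [if_pos hMT]
        by_cases hsM : s ∈ M
        · rw [if_pos hsM, if_neg, mul_zero]
          intro hcon
          exact (Finset.notMem_empty s)
            (hcon ▸ Finset.mem_inter.2 ⟨hsM, Finset.mem_insert_self s T⟩)
        · rw [if_neg hsM,
            if_pos (by rw [Finset.inter_insert_of_notMem hsM, hMT]), mul_comm]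
      · rw [if_neg hMT, if_neg, mul_zero]
        intro hcon
        apply hMT
        rw [Finset.eq_empty_iff_forall_notMem] at hcon ⊢
        intro x hx
        have : x ∈ M ∩ insert s T := by
          have hxM := (Finset.mem_inter.1 hx).1
          have hxT := (Finset.mem_inter.1 hx).2
          exact Finset.mem_inter.2 ⟨hxM, Finset.mem_insert_of_mem hxT⟩
        exact hcon x this
    rw [Finset.sum_congr rfl h2]
    by_cases hMT : M ∩ T = ∅
    · simp only [if_pos hMT]
      have : (N \ T) \ M = (N \ T).filter (fun s => ¬ s ∈ M) := by
        ext x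
        simp only [Finset.mem_sdiff, Finset.mem_filter]
        try tauto
      rw [Finset.mul_sum, this, Finset.sum_filter]
      apply Finset.sum_congr rfl
      intro x _
      by_cases hx : x ∈ M
      · simp [hx]
      · simp [hx]
    · simp only [if_neg hMT]
      simp
  rw [Finset.sum_congr rfl (fun M _ => h1 M), Finset.sum_comm]
  calc ∑ s ∈ N \ T, ∑ M : Finset (Fin ns),
        fstar 3 (deg s) * (if M ∩ insert s T = ∅ then μ M else 0)
      ≤ ∑ s ∈ N \ T, ∏ t ∈ T, (fstar 3 (deg t))⁻¹ := by
        apply Finset.sum_le_sum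
        intro s hs
        have hsT : s ∉ T := (Finset.mem_sdiff.1 hs).2
        rw [← Finset.mul_sum]
        calc fstar 3 (deg s) *
              (∑ M : Finset (Fin ns), if M ∩ insert s T = ∅ then μ M else 0)
            ≤ fstar 3 (deg s) * ∏ t ∈ insert s T, (fstar 3 (deg t))⁻¹ :=
              mul_le_mul_of_nonneg_left (hinv (insert s T)) (le_of_lt (fstar3_pos _))
          _ = ∏ t ∈ T, (fstar 3 (deg t))⁻¹ := by
              rw [Finset.prod_insert hsT, ← mul_assoc,
                mul_inv_cancel₀ (ne_of_gt (fstar3_pos _)), one_mul]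
    _ = ((N \ T).card : ℝ) * ∏ s ∈ T, (fstar 3 (deg s))⁻¹ := by
        rw [Finset.sum_const, nsmul_eq_mul]

lemma step_inv {ns : ℕ} (deg : Fin ns → ℕ) (N : Finset (Fin ns)) (hN : N.card ≤ 3)
    (μ : Finset (Fin ns) → ℝ) (hμ0 : ∀ M, 0 ≤ μ M)
    (hinv : ∀ T : Finset (Fin ns),
      (∑ M : Finset (Fin ns), if M ∩ T = ∅ then μ M else 0) ≤ ∏ s ∈ T, (fstar 3 (deg s))⁻¹)
    (T : Finset (Fin ns)) :
    (∑ M' : Finset (Fin ns), if M' ∩ T = ∅ then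
        (∑ M : Finset (Fin ns), μ M * ocsTransProb (fstar 3) deg N M M') else 0)
      ≤ ∏ s ∈ T, (fstar 3 (if s ∈ N then deg s + 1 else deg s))⁻¹ := by
  -- abbreviation for the one-step "stay unmatched on T" probability from M
  set q : Finset (Fin ns) → ℝ := fun M =>
    ∑ M' : Finset (Fin ns), if M' ∩ T = ∅ then ocsTransProb (fstar 3) deg N M M' else 0
    with hq
  have hswap : (∑ M' : Finset (Fin ns), if M' ∩ T = ∅ then
      (∑ M : Finset (Fin ns), μ M * ocsTransProb (fstar 3) deg N M M') else 0)
      = ∑ M : Finset (Fin ns), μ M * q M := by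
    have h1 : ∀ M' : Finset (Fin ns), (if M' ∩ T = ∅ then
        (∑ M : Finset (Fin ns), μ M * ocsTransProb (fstar 3) deg N M M') else 0)
        = ∑ M : Finset (Fin ns), μ M *
            (if M' ∩ T = ∅ then ocsTransProb (fstar 3) deg N M M' else 0) := by
      intro M'
      split
      · rfl
      · simp
    rw [Finset.sum_congr rfl (fun M' _ => h1 M'), Finset.sum_comm]
    exact Finset.sum_congr rfl fun M _ => (Finset.mul_sum _ _ _).symm
  rw [hswap]
  by_cases hA : N ∩ T = ∅
  · -- T untouched by the request
    have htarget : ∏ s ∈ T, (fstar 3 (if s ∈ N then deg s + 1 else deg s))⁻¹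
        = ∏ s ∈ T, (fstar 3 (deg s))⁻¹ := by
      apply Finset.prod_congr rfl
      intro s hs
      have : s ∉ N := fun hsN => (Finset.notMem_empty s)
        (hA ▸ Finset.mem_inter.2 ⟨hsN, hs⟩)
      rw [if_neg this]
    rw [htarget]
    calc ∑ M : Finset (Fin ns), μ M * q M
        ≤ ∑ M : Finset (Fin ns), (if M ∩ T = ∅ then μ M else 0) := by
          apply Finset.sum_le_sum
          intro M _
          by_cases hMT : M ∩ T = ∅
          · rw [if_pos hMT]
            calc μ M * q M ≤ μ M * 1 :=
                mul_le_mul_of_nonneg_left (q_le_one deg N T M) (hμ0 M)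
              _ = μ M := mul_one _
          · rw [if_neg hMT, hq]
            simp only
            rw [q_zero deg N T M hMT, mul_zero]
      _ ≤ _ := hinv T
  · have hAne : (N ∩ T).Nonempty := Finset.nonempty_iff_ne_empty.2 hA
    have hk3 : (N ∩ T).card ≤ 3 := le_trans (Finset.card_le_card Finset.inter_subset_left) hN
    set mR : ℝ := 3 - ((N ∩ T).card : ℝ) with hmRdef
    have hmR : 0 ≤ mR := by
      have : ((N ∩ T).card : ℝ) ≤ 3 := by exact_mod_cast hk3
      rw [hmRdef]; linarith
    set c : ℝ := ∑ s ∈ N ∩ T, fstar 3 (deg s) with hcdef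
    have hc : 0 < c := Finset.sum_pos (fun s _ => fstar3_pos _) hAne
    have hdpos : (0:ℝ) < (mR + c)^2 := by positivity
    set Pi : ℝ := ∏ s ∈ T, (fstar 3 (deg s))⁻¹ with hPidef
    have hPi0 : 0 ≤ Pi := Finset.prod_nonneg fun s _ => inv_nonneg.2 (le_of_lt (fstar3_pos _))
    set FB : Finset (Fin ns) → ℝ := fun M => ∑ s ∈ (N \ T) \ M, fstar 3 (deg s) with hFBdef
    have hFB0 : ∀ M, 0 ≤ FB M := fun M => Finset.sum_nonneg fun s _ => le_of_lt (fstar3_pos _)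
    have hterm : ∀ M : Finset (Fin ns), μ M * q M ≤
        (mR^2 * (if M ∩ T = ∅ then μ M else 0)
          + c * (if M ∩ T = ∅ then μ M * FB M else 0)) / (mR + c)^2 := by
      intro M
      by_cases hMT : M ∩ T = ∅
      · rw [if_pos hMT, if_pos hMT]
        have hq1 : q M = FB M / (c + FB M) := by
          rw [hq]; simp only [hFBdef, hcdef]; exact q_eq' deg N T M hMT hAne
        rw [hq1]
        have htan : FB M / (c + FB M) ≤ (mR^2 + c * FB M) / (mR + c)^2 := by
          rw [div_le_div_iff₀ (by nlinarith [hFB0 M]) hdpos]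
          nlinarith [sq_nonneg (FB M - mR), hFB0 M]
        calc μ M * (FB M / (c + FB M)) ≤ μ M * ((mR^2 + c * FB M) / (mR + c)^2) :=
            mul_le_mul_of_nonneg_left htan (hμ0 M)
          _ = (mR^2 * μ M + c * (μ M * FB M)) / (mR + c)^2 := by ring
      · rw [if_neg hMT, if_neg hMT, hq]
        simp only
        rw [q_zero deg N T M hMT, mul_zero]
        positivity
    have hu : (∑ M : Finset (Fin ns), if M ∩ T = ∅ then μ M else 0) ≤ Pi := hinv T
    have hv : (∑ M : Finset (Fin ns), if M ∩ T = ∅ then μ M * FB M else 0) ≤ mR * Pi := by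
      have hvb := v_bound deg N T μ hμ0 hinv
      have hcard : (((N \ T).card : ℝ)) ≤ mR := by
        have h1 : (N ∩ T).card + (N \ T).card = N.card := Finset.card_inter_add_card_sdiff N T
        have h2 : (N ∩ T).card + (N \ T).card ≤ 3 := h1 ▸ hN
        have h2' : ((N ∩ T).card:ℝ) + ((N \ T).card:ℝ) ≤ 3 := by exact_mod_cast h2
        rw [hmRdef]
        linarith
      calc (∑ M : Finset (Fin ns), if M ∩ T = ∅ then μ M * FB M else 0)
          ≤ ((N \ T).card : ℝ) * Pi := by
            simp only [hFBdef]
            exact hvb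
        _ ≤ mR * Pi := mul_le_mul_of_nonneg_right hcard hPi0
    calc ∑ M : Finset (Fin ns), μ M * q M
        ≤ ∑ M : Finset (Fin ns), (mR^2 * (if M ∩ T = ∅ then μ M else 0)
            + c * (if M ∩ T = ∅ then μ M * FB M else 0)) / (mR + c)^2 :=
          Finset.sum_le_sum fun M _ => hterm M
      _ = (mR^2 * (∑ M : Finset (Fin ns), if M ∩ T = ∅ then μ M else 0)
            + c * (∑ M : Finset (Fin ns), if M ∩ T = ∅ then μ M * FB M else 0)) / (mR + c)^2 := by
          rw [← Finset.sum_div, Finset.sum_add_distrib, ← Finset.mul_sum, ← Finset.mul_sum]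
      _ ≤ (mR^2 * Pi + c * (mR * Pi)) / (mR + c)^2 := by
          apply div_le_div_of_nonneg_right ?_ hdpos.le
          have h1 := mul_le_mul_of_nonneg_left hu (sq_nonneg mR)
          have h2 := mul_le_mul_of_nonneg_left hv hc.le
          linarith
      _ ≤ ∏ s ∈ T, (fstar 3 (if s ∈ N then deg s + 1 else deg s))⁻¹ := by
          have heq : (mR^2 * Pi + c * (mR * Pi)) / (mR + c)^2 = (mR / (mR + c)) * Pi := by
            field_simp
          rw [heq]
          have hAT : N ∩ T ⊆ T := Finset.inter_subset_right
          have hsplit2 := Finset.prod_sdiff hAT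
            (f := fun s => (fstar 3 (if s ∈ N then deg s + 1 else deg s))⁻¹)
          rw [← hsplit2]
          have hTA : (∏ s ∈ T \ (N ∩ T), (fstar 3 (if s ∈ N then deg s + 1 else deg s))⁻¹)
              = ∏ s ∈ T \ (N ∩ T), (fstar 3 (deg s))⁻¹ := by
            apply Finset.prod_congr rfl
            intro s hs
            have hsT : s ∈ T := (Finset.mem_sdiff.1 hs).1
            have : s ∉ N := fun hsN => (Finset.mem_sdiff.1 hs).2 (Finset.mem_inter.2 ⟨hsN, hsT⟩)
            rw [if_neg this]
          have honA : (∏ s ∈ N ∩ T, (fstar 3 (if s ∈ N then deg s + 1 else deg s))⁻¹)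
              = ∏ s ∈ N ∩ T, (fstar 3 (deg s + 1))⁻¹ := by
            apply Finset.prod_congr rfl
            intro s hs
            rw [if_pos (Finset.mem_inter.1 hs).1]
          rw [hTA, honA]
          have hsplit1 := Finset.prod_sdiff hAT (f := fun s => (fstar 3 (deg s))⁻¹)
          rw [hPidef, ← hsplit1]
          have hkey := key_prod deg (N ∩ T) hAne hk3
          rw [← hmRdef, ← hcdef] at hkey
          have hp1 : (∏ s ∈ N ∩ T, (fstar 3 (deg s))⁻¹)
              = (∏ s ∈ N ∩ T, fstar 3 (deg s))⁻¹ := Finset.prod_inv_distrib _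
          have hp2 : (∏ s ∈ N ∩ T, (fstar 3 (deg s + 1))⁻¹)
              = (∏ s ∈ N ∩ T, fstar 3 (deg s + 1))⁻¹ := Finset.prod_inv_distrib _
          rw [hp1, hp2]
          set P1 : ℝ := ∏ s ∈ N ∩ T, fstar 3 (deg s) with hP1def
          set P2 : ℝ := ∏ s ∈ N ∩ T, fstar 3 (deg s + 1) with hP2def
          set Q : ℝ := ∏ s ∈ T \ (N ∩ T), (fstar 3 (deg s))⁻¹ with hQdef
          have hP1 : 0 < P1 := Finset.prod_pos fun s _ => fstar3_pos _
          have hP2 : 0 < P2 := Finset.prod_pos fun s _ => fstar3_pos _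
          have hQ0 : 0 ≤ Q := Finset.prod_nonneg fun s _ => inv_nonneg.2 (le_of_lt (fstar3_pos _))
          have hcore : mR / (mR + c) * P1⁻¹ ≤ P2⁻¹ := by
            rw [inv_eq_one_div, inv_eq_one_div, div_mul_div_comm,
              div_le_div_iff₀ (by positivity) hP2]
            nlinarith [hkey]
          calc mR / (mR + c) * (Q * P1⁻¹) = Q * (mR / (mR + c) * P1⁻¹) := by ring
            _ ≤ Q * P2⁻¹ := mul_le_mul_of_nonneg_left hcore hQ0

lemma run_nonneg {ns : ℕ} : ∀ (Ns : List (Finset (Fin ns))) (deg : Fin ns → ℕ)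
    (μ : Finset (Fin ns) → ℝ), (∀ M, 0 ≤ μ M) → ∀ M, 0 ≤ ocsRun (fstar 3) Ns deg μ M := by
  intro Ns
  induction Ns with
  | nil => intro deg μ h M; exact h M
  | cons N rest ih =>
    intro deg μ h M
    rw [ocsRun]
    apply ih
    intro M'
    exact Finset.sum_nonneg fun M _ => mul_nonneg (h M) (trans_nonneg deg N M M')

lemma run_mass {ns : ℕ} : ∀ (Ns : List (Finset (Fin ns))) (deg : Fin ns → ℕ)
    (μ : Finset (Fin ns) → ℝ),
    ∑ M : Finset (Fin ns), ocsRun (fstar 3) Ns deg μ M = ∑ M : Finset (Fin ns), μ M := by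
  intro Ns
  induction Ns with
  | nil => intro deg μ; rfl
  | cons N rest ih =>
    intro deg μ
    rw [ocsRun, ih]
    rw [Finset.sum_comm]
    apply Finset.sum_congr rfl
    intro M _
    rw [← Finset.mul_sum, trans_sum deg N M, mul_one]

lemma run_inv {ns : ℕ} : ∀ (Ns : List (Finset (Fin ns))), (∀ N ∈ Ns, N.card ≤ 3) →
    ∀ (deg : Fin ns → ℕ) (μ : Finset (Fin ns) → ℝ), (∀ M, 0 ≤ μ M) →
    (∀ T : Finset (Fin ns),
      (∑ M : Finset (Fin ns), if M ∩ T = ∅ then μ M else 0) ≤ ∏ s ∈ T, (fstar 3 (deg s))⁻¹) →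
    ∀ T : Finset (Fin ns),
      (∑ M : Finset (Fin ns), if M ∩ T = ∅ then ocsRun (fstar 3) Ns deg μ M else 0)
        ≤ ∏ s ∈ T, (fstar 3 (deg s + Ns.countP (fun N => decide (s ∈ N))))⁻¹ := by
  intro Ns
  induction Ns with
  | nil =>
    intro _ deg μ _ hinv T
    simpa [ocsRun] using hinv T
  | cons N rest ih =>
    intro hcard deg μ hμ0 hinv T
    rw [ocsRun]
    have hN : N.card ≤ 3 := hcard N List.mem_cons_self
    have h1 := ih (fun N' hN' => hcard N' (List.mem_cons_of_mem N hN'))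
      (fun s => if s ∈ N then deg s + 1 else deg s)
      (fun M' => ∑ M : Finset (Fin ns), μ M * ocsTransProb (fstar 3) deg N M M')
      (fun M' => Finset.sum_nonneg fun M _ => mul_nonneg (hμ0 M) (trans_nonneg deg N M M'))
      (fun T' => step_inv deg N hN μ hμ0 hinv T') T
    refine le_trans h1 (le_of_eq ?_)
    apply Finset.prod_congr rfl
    intro s _
    congr 2
    rw [List.countP_cons]
    by_cases hs : s ∈ N
    · simp only [hs, decide_true, if_true]
      omega
    · simp [hs]

lemma init_mass {ns : ℕ} :
    ∑ M : Finset (Fin ns), (if M = ∅ then (1:ℝ) else 0) = 1 := by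
  rw [Finset.sum_ite_eq' Finset.univ (∅ : Finset (Fin ns)) (fun _ => (1:ℝ))]
  simp

lemma dist_nonneg' {ns : ℕ} (Ns : List (Finset (Fin ns))) (M : Finset (Fin ns)) :
    0 ≤ ocsDist (fstar 3) Ns M := by
  apply run_nonneg
  intro M'
  split <;> norm_num

lemma dist_mass {ns : ℕ} (Ns : List (Finset (Fin ns))) :
    ∑ M : Finset (Fin ns), ocsDist (fstar 3) Ns M = 1 := by
  rw [ocsDist, run_mass, init_mass]

lemma matched_ge {ns : ℕ} (Ns : List (Finset (Fin ns))) (hcard : ∀ N ∈ Ns, N.card ≤ 3)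
    (hdeg : ∀ s : Fin ns, 3 ≤ Ns.countP fun N => decide (s ∈ N)) (s : Fin ns) :
    (649:ℝ)/777 ≤ ∑ M : Finset (Fin ns), if s ∈ M then ocsDist (fstar 3) Ns M else 0 := by
  have hinit0 : ∀ M : Finset (Fin ns), 0 ≤ (if M = ∅ then (1:ℝ) else 0) := by
    intro M; split <;> norm_num
  have hinitinv : ∀ T : Finset (Fin ns),
      (∑ M : Finset (Fin ns), if M ∩ T = ∅ then (if M = ∅ then (1:ℝ) else 0) else 0)
        ≤ ∏ t ∈ T, (fstar 3 ((fun _ => 0) t))⁻¹ := by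
    intro T
    have h1 : ∀ M : Finset (Fin ns), (if M ∩ T = ∅ then (if M = ∅ then (1:ℝ) else 0) else 0)
        = if M = ∅ then (1:ℝ) else 0 := by
      intro M
      by_cases hM : M = ∅
      · subst hM
        rw [Finset.empty_inter]
        simp
      · simp [hM]
    rw [Finset.sum_congr rfl (fun M _ => h1 M), init_mass]
    have : ∀ t ∈ T, (fstar 3 ((fun _ => (0:ℕ)) t))⁻¹ = 1 := by
      intro t _
      norm_num [show fstar 3 0 = 1 from by simp [fstar]]
    rw [Finset.prod_congr rfl this, Finset.prod_const_one]
  have hu := run_inv Ns hcard (fun _ => 0) (fun M => if M = ∅ then (1:ℝ) else 0)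
    hinit0 hinitinv {s}
  rw [Finset.prod_singleton] at hu
  have hbound : (fstar 3 ((0:ℕ) + Ns.countP fun N => decide (s ∈ N)))⁻¹ ≤ 128/777 := by
    have hm : fstar 3 3 ≤ fstar 3 ((0:ℕ) + Ns.countP fun N => decide (s ∈ N)) :=
      fstar3_mono (by have := hdeg s; omega)
    have h3 : fstar 3 3 = 777/128 := fstar3_three
    calc (fstar 3 ((0:ℕ) + Ns.countP fun N => decide (s ∈ N)))⁻¹
        ≤ (fstar 3 3)⁻¹ := by
          apply inv_anti₀ (by rw [h3]; norm_num) hm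
      _ = 128/777 := by rw [h3]; norm_num
  have hsplit : ∑ M : Finset (Fin ns), ocsDist (fstar 3) Ns M
      = (∑ M : Finset (Fin ns), if s ∈ M then ocsDist (fstar 3) Ns M else 0)
        + ∑ M : Finset (Fin ns), if M ∩ {s} = ∅ then ocsDist (fstar 3) Ns M else 0 := by
    rw [← Finset.sum_add_distrib]
    apply Finset.sum_congr rfl
    intro M _
    by_cases hsM : s ∈ M
    · rw [if_pos hsM, if_neg, add_zero]
      intro hcon
      exact (Finset.notMem_empty s)
        (hcon ▸ Finset.mem_inter.2 ⟨hsM, Finset.mem_singleton_self s⟩)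
    · rw [if_neg hsM, if_pos, zero_add]
      rw [Finset.inter_singleton_of_notMem hsM]
  have hmass := dist_mass Ns
  have hu' : (∑ M : Finset (Fin ns), if M ∩ {s} = ∅ then ocsDist (fstar 3) Ns M else 0)
      ≤ 128/777 := le_trans hu hbound
  rw [hmass] at hsplit
  linarith


/-- For `d = 3` the optimal candidate function satisfies `f*(1) = 3/2`, `f*(2) = 21/8`,
`f*(3) = 777/128`, hence `1 - 1/f*(3) = 649/777 > 0.8352`; consequently, on every
`(3,3)`-bounded instance (requests of degree at most `3`, servers of degree at least `3`)
with non-negative server weights, the OCS-based algorithm with weight sequence `f*` gets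
expected matched weight at least `0.8352` times the weight of any matching: it is at
least `0.8352`-competitive for vertex-weighted online bipartite matching on
`(3,3)`-bounded graphs. -/
theorem fstar_three_values_and_competitiveness :
    fstar 3 1 = 3 / 2 ∧ fstar 3 2 = 21 / 8 ∧ fstar 3 3 = 777 / 128 ∧
    1 - 1 / fstar 3 3 = 649 / 777 ∧ (0.8352 : ℝ) < 649 / 777 ∧
    ∀ (ns : ℕ) (Ns : List (Finset (Fin ns))),
      (∀ N ∈ Ns, N.card ≤ 3) →
      (∀ s : Fin ns, 3 ≤ Ns.countP fun N => decide (s ∈ N)) →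
      ∀ w : Fin ns → ℝ, (∀ s, 0 ≤ w s) →
      ∀ g : Fin Ns.length → Option (Fin ns), IsMatching Ns g →
        0.8352 * (∑ i : Fin Ns.length, ((g i).map w).getD 0) ≤
          ∑ M : Finset (Fin ns), ocsDist (fstar 3) Ns M * ∑ s ∈ M, w s := by
  refine ⟨fstar3_one, fstar3_two, fstar3_three, by rw [fstar3_three]; norm_num,
    by norm_num, ?_⟩
  intro ns Ns hcard hdeg w hw g hg
  have hLHS : (∑ i : Fin Ns.length, ((g i).map w).getD 0) ≤ ∑ s : Fin ns, w s := by
    have h1 : ∀ i : Fin Ns.length, ((g i).map w).getD 0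
        = ∑ s : Fin ns, if g i = some s then w s else 0 := by
      intro i
      cases hgi : g i with
      | none => simp [hgi]
      | some t => simp [hgi]
    rw [Finset.sum_congr rfl (fun i _ => h1 i), Finset.sum_comm]
    apply Finset.sum_le_sum
    intro s _
    have h2 : (∑ i : Fin Ns.length, if g i = some s then w s else 0)
        = ((Finset.univ.filter (fun i => g i = some s)).card : ℝ) * w s := by
      rw [Finset.sum_ite, Finset.sum_const, Finset.sum_const_zero, add_zero, nsmul_eq_mul]
    rw [h2]
    have h3 : (Finset.univ.filter (fun i => g i = some s)).card ≤ 1 := by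
      apply Finset.card_le_one.2
      intro a ha b hb
      exact hg.2 a b s (Finset.mem_filter.1 ha).2 (Finset.mem_filter.1 hb).2
    calc ((Finset.univ.filter (fun i => g i = some s)).card : ℝ) * w s
        ≤ 1 * w s := by
          apply mul_le_mul_of_nonneg_right _ (hw s)
          exact_mod_cast h3
      _ = w s := one_mul _
  have hRHS : (∑ M : Finset (Fin ns), ocsDist (fstar 3) Ns M * ∑ s ∈ M, w s)
      = ∑ s : Fin ns, w s *
          ∑ M : Finset (Fin ns), (if s ∈ M then ocsDist (fstar 3) Ns M else 0) := by
    have h1 : ∀ M : Finset (Fin ns), ocsDist (fstar 3) Ns M * ∑ s ∈ M, w s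
        = ∑ s : Fin ns, (if s ∈ M then ocsDist (fstar 3) Ns M * w s else 0) := by
      intro M
      have h2 : (∑ s ∈ M, w s) = ∑ s : Fin ns, if s ∈ M then w s else 0 := by
        rw [Finset.sum_ite_mem, Finset.univ_inter]
      rw [h2, Finset.mul_sum]
      apply Finset.sum_congr rfl
      intro s _
      rw [mul_ite, mul_zero]
    rw [Finset.sum_congr rfl (fun M _ => h1 M), Finset.sum_comm]
    apply Finset.sum_congr rfl
    intro s _
    rw [Finset.mul_sum]
    apply Finset.sum_congr rfl
    intro M _
    rw [mul_ite, mul_zero, mul_comm]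
  rw [hRHS]
  calc (0.8352:ℝ) * (∑ i : Fin Ns.length, ((g i).map w).getD 0)
      ≤ 0.8352 * ∑ s : Fin ns, w s :=
        mul_le_mul_of_nonneg_left hLHS (by norm_num)
    _ ≤ ∑ s : Fin ns, w s *
          ∑ M : Finset (Fin ns), (if s ∈ M then ocsDist (fstar 3) Ns M else 0) := by
        rw [Finset.mul_sum]
        apply Finset.sum_le_sum
        intro s _
        have hp := matched_ge Ns hcard hdeg s
        calc (0.8352:ℝ) * w s ≤ (649/777) * w s :=
              mul_le_mul_of_nonneg_right (by norm_num) (hw s)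
          _ ≤ (∑ M : Finset (Fin ns), if s ∈ M then ocsDist (fstar 3) Ns M else 0) * w s :=
              mul_le_mul_of_nonneg_right hp (hw s)
          _ = w s * ∑ M : Finset (Fin ns), (if s ∈ M then ocsDist (fstar 3) Ns M else 0) :=
              mul_comm _ _
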